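/- Suppose a submodule W of F^α_{2b}(V) contains w_i(r₁,r₂) = Σ_{j=0}^{s} a_{ij}(r₁,r₂) v_{i+j}(r₁,r₂) with a_{i0}=1, a_{is}≠0, and is closed under Ē₃₁. If α₁−b−λ ∉ ℤ, then the coefficients of the resulting element Ē₃₁ w_i(r₁,r₂) (normalized so its v_i-coefficient is 1) satisfy a_{ij}(r₁−1,r₂) = ((r₁+α₁−b−λ−i−j)/(r₁+α₁−b−λ−i)) a_{ij}(r₁,r₂) for j = 1,…,s. -/

import Mathlib

set_option linter.unusedVariables false
/- F^α_{2b}(V) modeled as (ℤ × ℤ × ℤ) →₀ ℂ with basis vᵢ(r₁,r₂) = single (i,r₁,r₂) 1,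
   carrying the sl₃-action of formulas (3.2): parameters α₁, α₂, λ (written lam), b, c. -/

abbrev F3 := (ℤ × ℤ × ℤ) →₀ ℂ

/-- The basis vector vᵢ(r₁,r₂). -/
noncomputable def vb (i r₁ r₂ : ℤ) : F3 := Finsupp.single (i, r₁, r₂) 1

noncomputable def Eb11 (α₁ α₂ lam b c : ℂ) : F3 →ₗ[ℂ] F3 :=
  Finsupp.lsum ℂ fun p => ((p.2.1 : ℂ) + α₁) • Finsupp.lsingle p

noncomputable def Eb22 (α₁ α₂ lam b c : ℂ) : F3 →ₗ[ℂ] F3 :=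
  Finsupp.lsum ℂ fun p => ((p.2.2 : ℂ) + α₂) • Finsupp.lsingle p

noncomputable def Eb33 (α₁ α₂ lam b c : ℂ) : F3 →ₗ[ℂ] F3 :=
  Finsupp.lsum ℂ fun p => (-((p.2.1 : ℂ) + α₁ + (p.2.2 : ℂ) + α₂)) • Finsupp.lsingle p

noncomputable def Eb12 (α₁ α₂ lam b c : ℂ) : F3 →ₗ[ℂ] F3 :=
  Finsupp.lsum ℂ fun p =>
    (lam + (p.1 : ℂ) - b + (p.2.2 : ℂ) + α₂) • Finsupp.lsingle (p.1, p.2.1 + 1, p.2.2 - 1)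
      + (c + lam + (p.1 : ℂ)) • Finsupp.lsingle (p.1 + 1, p.2.1 + 1, p.2.2 - 1)

noncomputable def Eb21 (α₁ α₂ lam b c : ℂ) : F3 →ₗ[ℂ] F3 :=
  Finsupp.lsum ℂ fun p =>
    (c - lam - (p.1 : ℂ)) • Finsupp.lsingle (p.1 - 1, p.2.1 - 1, p.2.2 + 1)
      + (-(lam + (p.1 : ℂ)) - b + (p.2.1 : ℂ) + α₁) • Finsupp.lsingle (p.1, p.2.1 - 1, p.2.2 + 1)

noncomputable def Eb13 (α₁ α₂ lam b c : ℂ) : F3 →ₗ[ℂ] F3 :=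
  Finsupp.lsum ℂ fun p =>
    -(((p.2.1 : ℂ) + α₁ + (p.2.2 : ℂ) + α₂ + b + lam + (p.1 : ℂ)) • Finsupp.lsingle (p.1, p.2.1 + 1, p.2.2)
      + (c + lam + (p.1 : ℂ)) • Finsupp.lsingle (p.1 + 1, p.2.1 + 1, p.2.2))

noncomputable def Eb31 (α₁ α₂ lam b c : ℂ) : F3 →ₗ[ℂ] F3 :=
  Finsupp.lsum ℂ fun p =>
    ((p.2.1 : ℂ) + α₁ - b - lam - (p.1 : ℂ)) • Finsupp.lsingle (p.1, p.2.1 - 1, p.2.2)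

noncomputable def Eb23 (α₁ α₂ lam b c : ℂ) : F3 →ₗ[ℂ] F3 :=
  Finsupp.lsum ℂ fun p =>
    -((c - lam - (p.1 : ℂ)) • Finsupp.lsingle (p.1 - 1, p.2.1, p.2.2 + 1)
      + ((p.2.1 : ℂ) + α₁ + (p.2.2 : ℂ) + α₂ + b - lam - (p.1 : ℂ)) • Finsupp.lsingle (p.1, p.2.1, p.2.2 + 1))

noncomputable def Eb32 (α₁ α₂ lam b c : ℂ) : F3 →ₗ[ℂ] F3 :=
  Finsupp.lsum ℂ fun p =>
    ((p.2.2 : ℂ) + α₂ - b + lam + (p.1 : ℂ)) • Finsupp.lsingle (p.1, p.2.1, p.2.2 - 1)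

/- Ē₃₁ acts diagonally on the basis up to the shift r₁ ↦ r₁ − 1, so it maps w_i(r₁,r₂) term by term
to a combination of the v_{i+j}(r₁−1,r₂); the v_i-coefficient r₁+α₁−b−λ−i never vanishes because
α₁−b−λ ∉ ℤ, so it can be factored out. -/

lemma Eb31_vb (α₁ α₂ lam b c : ℂ) (k r₁ r₂ : ℤ) :
    Eb31 α₁ α₂ lam b c (vb k r₁ r₂) = ((r₁ : ℂ) + α₁ - b - lam - k) • vb k (r₁ - 1) r₂ := by
  simp [Eb31, vb, Finsupp.smul_single]

lemma Eb31_sum_smul_vb (α₁ α₂ lam b c : ℂ) {ι : Type*} (t : Finset ι) (a : ι → ℂ) (k : ι → ℤ)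
    (r₁ r₂ : ℤ) :
    Eb31 α₁ α₂ lam b c (∑ j ∈ t, a j • vb (k j) r₁ r₂)
      = ∑ j ∈ t, (((r₁ : ℂ) + α₁ - b - lam - k j) * a j) • vb (k j) (r₁ - 1) r₂ := by
  simp only [map_sum, map_smul, Eb31_vb, smul_smul, mul_comm]

lemma Eb31_eigenvalue_ne_zero {α₁ b lam : ℂ} (h : ∀ m : ℤ, α₁ - b - lam ≠ (m : ℂ)) (r k : ℤ) :
    (r : ℂ) + α₁ - b - lam - k ≠ 0 := by
  intro h0
  apply h (k - r)
  push_cast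
  linear_combination h0

theorem E31_coefficient_recursion_general (α₁ α₂ lam b c : ℂ)
    (h : ∀ m : ℤ, α₁ - b - lam ≠ (m : ℂ))
    (s : ℕ) (a : ℕ → ℂ)
    (i r₁ r₂ : ℤ) :
    Eb31 α₁ α₂ lam b c (∑ j ∈ Finset.range (s + 1), a j • vb (i + (j : ℤ)) r₁ r₂)
      = ((r₁ : ℂ) + α₁ - b - lam - (i : ℂ)) •
          ∑ j ∈ Finset.range (s + 1),
            ((((r₁ : ℂ) + α₁ - b - lam - (i : ℂ) - (j : ℂ)) /
              ((r₁ : ℂ) + α₁ - b - lam - (i : ℂ))) * a j) • vb (i + (j : ℤ)) (r₁ - 1) r₂ := by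
  have hD := Eb31_eigenvalue_ne_zero h r₁ i
  rw [Eb31_sum_smul_vb, Finset.smul_sum]
  refine Finset.sum_congr rfl fun j _ => ?_
  rw [smul_smul, ← mul_assoc, mul_div_cancel₀ _ hD]
  push_cast
  congr 1
  ring

/-- Applying Ē₃₁ to w_i(r₁,r₂) = Σ_{j=0}^s a_j v_{i+j}(r₁,r₂) (with a₀ = 1, a_s ≠ 0) gives,
    after normalizing the vᵢ-coefficient to 1, the coefficients
    a_{ij}(r₁−1,r₂) = ((r₁+α₁−b−λ−i−j)/(r₁+α₁−b−λ−i)) a_j; all denominators are nonzero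
    since α₁−b−λ ∉ ℤ. -/
theorem E31_coefficient_recursion (α₁ α₂ lam b c : ℂ)
    (h : ∀ m : ℤ, α₁ - b - lam ≠ (m : ℂ))
    (s : ℕ) (hs : 1 ≤ s) (a : ℕ → ℂ) (ha0 : a 0 = 1) (has : a s ≠ 0)
    (i r₁ r₂ : ℤ) (W : Submodule ℂ F3)
    (hw : (∑ j ∈ Finset.range (s + 1), a j • vb (i + (j : ℤ)) r₁ r₂) ∈ W)
    (hW31 : ∀ x ∈ W, Eb31 α₁ α₂ lam b c x ∈ W) :
    Eb31 α₁ α₂ lam b c (∑ j ∈ Finset.range (s + 1), a j • vb (i + (j : ℤ)) r₁ r₂)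
      = ((r₁ : ℂ) + α₁ - b - lam - (i : ℂ)) •
          ∑ j ∈ Finset.range (s + 1),
            ((((r₁ : ℂ) + α₁ - b - lam - (i : ℂ) - (j : ℂ)) /
              ((r₁ : ℂ) + α₁ - b - lam - (i : ℂ))) * a j) • vb (i + (j : ℤ)) (r₁ - 1) r₂ :=
  E31_coefficient_recursion_general α₁ α₂ lam b c h s a i r₁ r₂
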